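/- With ΛQ = (1/3)Q + (1/2)·x·Q', one has L(ΛQ) = -Q on ℝ. -/

import Mathlib

/-!
If `f'' = f - f ^ (p + 1)`, then `f_λ x = λ ^ (2 / p) f (λ x)` solves
`f_λ'' = λ ^ 2 f_λ - f_λ ^ (p + 1)`; differentiating at `λ = 1` shows that
`Λf = ½ ∂_λ f_λ |_{λ=1} = f / p + x f' / 2` satisfies `-(Λf)'' + Λf - (p + 1) f ^ p Λf = -f`.
Directly, it is a computation with `f''' = f' - (p + 1) f ^ p f'`.
The profile `Q = (5/2) ^ (1/3) w ^ 2` with `w = cosh (3x/2) ^ (-1/3)` solves the equation for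
`p = 3`: both sides of `Q'' = Q - Q ^ 4` are polynomials in `w`, `sinh (3x/2)` and `cosh (3x/2)`
that agree modulo `w ^ 3 cosh (3x/2) = 1` and `sinh ^ 2 = cosh ^ 2 - 1`.
-/

noncomputable def Q : ℝ → ℝ := fun x => (5/2 : ℝ) ^ ((1:ℝ)/3) * (Real.cosh (3*x/2)) ^ (-(2:ℝ)/3)

noncomputable def L (f : ℝ → ℝ) : ℝ → ℝ := fun x => -(deriv (deriv f)) x + f x - 4 * (Q x)^3 * f x

noncomputable def ΛQ : ℝ → ℝ := fun x => (1/3) * Q x + (1/2) * x * deriv Q x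

open Real

noncomputable def scalingGenerator (p : ℕ) (f : ℝ → ℝ) (x : ℝ) : ℝ :=
  f x / p + x * deriv f x / 2

noncomputable def linearizedOp (p : ℕ) (f u : ℝ → ℝ) (x : ℝ) : ℝ :=
  -deriv (deriv u) x + u x - (p + 1) * f x ^ p * u x

theorem linearizedOp_scalingGenerator {p : ℕ} (hp : p ≠ 0) {f f' : ℝ → ℝ}
    (hf : ∀ x, HasDerivAt f (f' x) x) (hf' : ∀ x, HasDerivAt f' (f x - f x ^ (p + 1)) x)
    (x : ℝ) : linearizedOp p f (scalingGenerator p f) x = -f x := by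
  have hderiv : deriv f = f' := funext fun x => (hf x).deriv
  have hΛ' : ∀ x, HasDerivAt (scalingGenerator p f)
      (f' x / p + (f' x + x * (f x - f x ^ (p + 1))) / 2) x := by
    intro x
    rw [show scalingGenerator p f = fun x => f x / p + x * f' x / 2 from
      funext fun x => by rw [scalingGenerator, hderiv]]
    exact ((hf x).div_const _).fun_add
      (((hasDerivAt_id' x).fun_mul (hf' x)).div_const 2) |>.congr_deriv (by ring)
  have hf''' : HasDerivAt (fun x => f x - f x ^ (p + 1))
      (f' x - (p + 1) * f x ^ p * f' x) x :=
    (hf x).fun_sub ((hf x).fun_pow (p + 1)) |>.congr_deriv (by push_cast; simp)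
  have hΛ'' : HasDerivAt (deriv (scalingGenerator p f))
      ((f x - f x ^ (p + 1)) / p + (2 * (f x - f x ^ (p + 1))
        + x * (f' x - (p + 1) * f x ^ p * f' x)) / 2) x := by
    rw [show deriv (scalingGenerator p f) = _ from funext fun x => (hΛ' x).deriv]
    exact ((hf' x).div_const _).fun_add (((hf' x).fun_add
      ((hasDerivAt_id' x).fun_mul hf''')).div_const 2) |>.congr_deriv (by ring)
  rw [linearizedOp, hΛ''.deriv, scalingGenerator, hderiv]
  have hp' : (p : ℝ) ≠ 0 := Nat.cast_ne_zero.mpr hp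
  field_simp
  ring

theorem rpow_neg_natCast_div_three {u : ℝ} (hu : 0 < u) (n : ℕ) :
    u ^ (-(n : ℝ) / 3) = (u ^ (-(1 : ℝ) / 3)) ^ n := by
  rw [← rpow_natCast, ← rpow_mul hu.le]
  ring_nf

theorem rpow_one_div_three_pow_three {u : ℝ} (hu : 0 ≤ u) : (u ^ ((1 : ℝ) / 3)) ^ 3 = u := by
  rw [← rpow_natCast, ← rpow_mul hu]
  norm_num

theorem hasDerivAt_three_mul_div_two (x : ℝ) : HasDerivAt (fun x : ℝ => 3 * x / 2) (3 / 2) x := by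
  simpa using ((hasDerivAt_id' x).const_mul 3).div_const 2

noncomputable def sechCbrt (x : ℝ) : ℝ := cosh (3 * x / 2) ^ (-(1 : ℝ) / 3)

theorem sechCbrt_pow_three_mul_cosh (x : ℝ) : sechCbrt x ^ 3 * cosh (3 * x / 2) = 1 := by
  rw [sechCbrt, ← rpow_neg_natCast_div_three (cosh_pos _)]
  norm_num [rpow_neg_one, (cosh_pos _).ne']

theorem hasDerivAt_sechCbrt (x : ℝ) :
    HasDerivAt sechCbrt (-(1 / 2) * sechCbrt x ^ 4 * sinh (3 * x / 2)) x := by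
  have h := (hasDerivAt_three_mul_div_two x).cosh.rpow_const (p := -(1 : ℝ) / 3)
    (Or.inl (cosh_pos _).ne')
  rw [show -(1 : ℝ) / 3 - 1 = -((4 : ℕ) : ℝ) / 3 by norm_num,
    rpow_neg_natCast_div_three (cosh_pos _)] at h
  exact h.congr_deriv (by rw [sechCbrt]; ring)

theorem Q_eq (x : ℝ) : Q x = (5 / 2 : ℝ) ^ ((1 : ℝ) / 3) * sechCbrt x ^ 2 := by
  rw [Q, show -(2 : ℝ) / 3 = -((2 : ℕ) : ℝ) / 3 by norm_num,
    rpow_neg_natCast_div_three (cosh_pos _), sechCbrt]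

noncomputable def Q' (x : ℝ) : ℝ :=
  -(5 / 2 : ℝ) ^ ((1 : ℝ) / 3) * (sechCbrt x ^ 5 * sinh (3 * x / 2))

theorem hasDerivAt_Q (x : ℝ) : HasDerivAt Q (Q' x) x := by
  rw [show Q = fun x => (5 / 2 : ℝ) ^ ((1 : ℝ) / 3) * sechCbrt x ^ 2 from funext Q_eq]
  exact ((hasDerivAt_sechCbrt x).fun_pow 2).const_mul _ |>.congr_deriv (by rw [Q']; ring)

theorem hasDerivAt_Q' (x : ℝ) : HasDerivAt Q' (Q x - Q x ^ 4) x := by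
  refine (((hasDerivAt_sechCbrt x).fun_pow 5).fun_mul
    (hasDerivAt_three_mul_div_two x).sinh).const_mul _ |>.congr_deriv ?_
  rw [Q_eq]
  set a := (5 / 2 : ℝ) ^ ((1 : ℝ) / 3)
  have ha : a ^ 3 = 5 / 2 := rpow_one_div_three_pow_three (by norm_num)
  have hw := sechCbrt_pow_three_mul_cosh x
  have hs := sinh_sq (3 * x / 2)
  linear_combination (5 / 2 * a * sechCbrt x ^ 8) * hs
    + (a * sechCbrt x ^ 2 * (5 / 2 * sechCbrt x ^ 3 * cosh (3 * x / 2) + 1)) * hw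
    + a * sechCbrt x ^ 8 * ha

theorem L_LambdaQ : ∀ x : ℝ, L ΛQ x = -Q x := by
  intro x
  have hΛ : ΛQ = scalingGenerator 3 Q :=
    funext fun x => by rw [ΛQ, scalingGenerator]; push_cast; ring
  have hL : L ΛQ x = linearizedOp 3 Q ΛQ x := by
    rw [L, linearizedOp]; norm_num
  rw [hL, hΛ]
  exact linearizedOp_scalingGenerator three_ne_zero hasDerivAt_Q hasDerivAt_Q' x
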